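/- Let m and n be integers with n ≥ 2 and m > 2n. Then: (i) for every finite simple graph W with at least one vertex, t(C_{2n}, W) ≥ t(C_m, W)^{2n/m}; and (ii) for every real c < 2n/m there exists a finite simple graph W with t(C_m, W) > 0 and t(C_{2n}, W) < t(C_m, W)^c. (That is, ρ(C_m, C_{2n}) = 2n/m for m > 2n.) -/

import Mathlib

/-! Writing `A` for the adjacency matrix of `W`, `hom(C_k, W) = tr A^k = ∑ λᵢ^k` over the
eigenvalues of `A`. For even `2n ≤ m`, `∑ λᵢ^m ≤ ∑ |λᵢ|^m ≤ (∑ λᵢ^{2n})^{m/2n}`, because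
`∑ xᵢ^p ≤ (∑ xᵢ)^p` for `xᵢ ≥ 0` and `p ≥ 1`; dividing by `|V(W)|^m` gives (i).
For (ii), let `W_N` be a triangle together with `N - 3` isolated vertices. A cycle has no isolated
vertices, so all its homomorphisms land in the triangle and `N^{-k} ≤ t(C_k, W_N) ≤ 3^k N^{-k}`.
With `c⁺ = max c 0` we have `c⁺ m < 2n`, so for large `N`
`3^{2n} N^{-2n} < N^{-c⁺ m} ≤ t(C_m, W_N)^{c⁺} ≤ t(C_m, W_N)^c`, the last step as `t ≤ 1`. -/

/-- The homomorphism density `t(G, W)`. -/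
noncomputable def homDensity {α β : Type} [Fintype α] [Fintype β]
    (G : SimpleGraph α) (W : SimpleGraph β) : ℝ :=
  (Nat.card (G →g W) : ℝ) / (Fintype.card β : ℝ) ^ (Fintype.card α)

open Filter Finset Matrix SimpleGraph

namespace Matrix

variable {β R : Type*} [Fintype β] [DecidableEq β]

theorem pow_succ_apply_eq_sum_prod [CommSemiring R] (A : Matrix β β R) (k : ℕ) (u v : β) :
    (A ^ (k + 1)) u v = ∑ p : Fin (k + 1) → β,
      if p (Fin.last k) = v then A u (p 0) * ∏ i : Fin k, A (p i.castSucc) (p i.succ) else 0 := by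
  induction k generalizing u with
  | zero =>
    rw [pow_one, ← (Equiv.funUnique (Fin 1) β).symm.sum_comp]
    simp
  | succ k ih =>
    rw [pow_succ', mul_apply, ← (Fin.consEquiv fun _ => β).sum_comp, Fintype.sum_prod_type]
    refine sum_congr rfl fun w _ => ?_
    simp [ih, mul_sum, Fin.prod_univ_succ]

theorem trace_pow_succ_eq_sum_prod [CommSemiring R] (A : Matrix β β R) (k : ℕ) :
    (A ^ (k + 1)).trace = ∑ p : Fin (k + 1) → β, ∏ i, A (p i) (p (i + 1)) := by
  simp only [trace, diag, pow_succ_apply_eq_sum_prod]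
  rw [sum_comm]
  refine sum_congr rfl fun p _ => ?_
  rw [sum_ite_eq, if_pos (mem_univ _), Fin.prod_univ_castSucc, Fin.last_add_one, mul_comm]
  simp [Fin.coeSucc_eq_succ]

theorem IsHermitian.trace_pow_eq_sum_eigenvalues_pow {𝕜 : Type*} [RCLike 𝕜] {A : Matrix β β 𝕜}
    (hA : A.IsHermitian) (k : ℕ) : (A ^ k).trace = ∑ i, (hA.eigenvalues i : 𝕜) ^ k := by
  conv_lhs => rw [hA.spectral_theorem]
  rw [← map_pow, Unitary.conjStarAlgAut_apply, trace_mul_cycle, Unitary.coe_star_mul_self,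
    one_mul, diagonal_pow, trace_diagonal]
  simp

end Matrix

theorem Finset.sum_rpow_le_rpow_sum {ι : Type*} (s : Finset ι) {f : ι → ℝ}
    (hf : ∀ i ∈ s, 0 ≤ f i) {p : ℝ} (hp : 1 ≤ p) :
    ∑ i ∈ s, f i ^ p ≤ (∑ i ∈ s, f i) ^ p := by
  classical
  induction s using Finset.induction_on with
  | empty => simp [Real.zero_rpow (by linarith : p ≠ 0)]
  | insert a s ha ih =>
    rw [sum_insert ha, sum_insert ha]
    have hfs := fun i hi => hf i (mem_insert_of_mem hi)
    calc f a ^ p + ∑ i ∈ s, f i ^ p ≤ f a ^ p + (∑ i ∈ s, f i) ^ p := by gcongr; exact ih hfs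
      _ ≤ (f a + ∑ i ∈ s, f i) ^ p :=
        Real.add_rpow_le_rpow_add (hf a (mem_insert_self a s)) (sum_nonneg hfs) hp

theorem Even.pow_le_pow_rpow {p : ℕ} (hp : Even p) (hp0 : p ≠ 0) (q : ℕ) (x : ℝ) :
    x ^ q ≤ (x ^ p) ^ ((q : ℝ) / p) := by
  rw [← hp.pow_abs, ← Real.rpow_natCast |x| p, ← Real.rpow_mul (abs_nonneg x),
    mul_div_cancel₀ _ (Nat.cast_ne_zero.mpr hp0), Real.rpow_natCast]
  exact (le_abs_self _).trans (abs_pow x q).le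

theorem Matrix.IsHermitian.trace_pow_le_trace_pow_rpow {β : Type*} [Fintype β] [DecidableEq β]
    {A : Matrix β β ℝ} (hA : A.IsHermitian) {p q : ℕ} (hp : Even p) (hp0 : p ≠ 0) (hpq : p ≤ q) :
    (A ^ q).trace ≤ (A ^ p).trace ^ ((q : ℝ) / p) := by
  simp only [hA.trace_pow_eq_sum_eigenvalues_pow, RCLike.ofReal_real_eq_id, id]
  have hqp : 1 ≤ (q : ℝ) / p := by
    rw [one_le_div₀ (by positivity)]
    exact_mod_cast hpq
  calc ∑ i, hA.eigenvalues i ^ q ≤ ∑ i, (hA.eigenvalues i ^ p) ^ ((q : ℝ) / p) :=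
        sum_le_sum fun i _ => hp.pow_le_pow_rpow hp0 q _
    _ ≤ _ := sum_rpow_le_rpow_sum _ (fun i _ => hp.pow_nonneg _) hqp

namespace SimpleGraph

variable {β : Type} [Fintype β]

theorem cycleGraph_adj_add_one {k : ℕ} (v : Fin (k + 2)) : (cycleGraph (k + 2)).Adj v (v + 1) := by
  simp [cycleGraph_adj]

theorem cycleGraph_exists_adj {k : ℕ} (hk : 2 ≤ k) (v : Fin k) : ∃ w, (cycleGraph k).Adj v w := by
  obtain ⟨j, rfl⟩ := Nat.exists_eq_add_of_le' hk
  exact ⟨v + 1, cycleGraph_adj_add_one v⟩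

def cycleGraphHomEquiv (k : ℕ) (W : SimpleGraph β) :
    (cycleGraph (k + 2) →g W) ≃ {f : Fin (k + 2) → β // ∀ i, W.Adj (f i) (f (i + 1))} where
  toFun φ := ⟨φ, fun i => φ.map_adj (cycleGraph_adj_add_one i)⟩
  invFun f := ⟨f.1, fun {u v} h => by
    rcases cycleGraph_adj.mp h with h | h
    · obtain rfl := sub_eq_iff_eq_add'.mp h
      exact (f.2 v).symm
    · obtain rfl := sub_eq_iff_eq_add'.mp h
      exact f.2 u⟩
  left_inv _ := rfl
  right_inv _ := rfl

theorem card_hom_cycleGraph_eq_trace {R : Type*} [CommSemiring R] [DecidableEq β] {k : ℕ}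
    (hk : 2 ≤ k) (W : SimpleGraph β) [DecidableRel W.Adj] :
    (Nat.card (cycleGraph k →g W) : R) = ((W.adjMatrix R) ^ k).trace := by
  obtain ⟨j, rfl⟩ := Nat.exists_eq_add_of_le' hk
  rw [Nat.card_congr (cycleGraphHomEquiv j W), Nat.card_eq_fintype_card, Fintype.card_subtype,
    trace_pow_succ_eq_sum_prod, card_filter, Nat.cast_sum]
  refine sum_congr rfl fun f _ => ?_
  simp [adjMatrix_apply, prod_boole]

end SimpleGraph

section HomDensity

variable {α β γ : Type} [Fintype α] [Fintype β] [Fintype γ]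

theorem homDensity_nonneg (G : SimpleGraph α) (W : SimpleGraph β) : 0 ≤ homDensity G W := by
  unfold homDensity
  positivity

theorem homDensity_le_one (G : SimpleGraph α) (W : SimpleGraph β) : homDensity G W ≤ 1 := by
  refine div_le_one_of_le₀ ?_ (by positivity)
  have := Nat.card_le_card_of_injective _ (DFunLike.coe_injective (F := G →g W))
  rw [Nat.card_fun, Nat.card_eq_fintype_card (α := β), Nat.card_eq_fintype_card (α := α)] at this
  exact_mod_cast this

theorem inv_card_pow_le_homDensity {G : SimpleGraph α} {W : SimpleGraph β} (φ : G →g W) :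
    ((Fintype.card β : ℝ) ^ Fintype.card α)⁻¹ ≤ homDensity G W := by
  have : Finite (G →g W) := .of_injective _ DFunLike.coe_injective
  have : Nonempty (G →g W) := ⟨φ⟩
  rw [homDensity, inv_eq_one_div]
  gcongr
  exact_mod_cast Nat.card_pos

theorem homDensity_cycleGraph_eq [DecidableEq β] {k : ℕ} (hk : 2 ≤ k) (W : SimpleGraph β)
    [DecidableRel W.Adj] :
    homDensity (cycleGraph k) W = ((W.adjMatrix ℝ) ^ k).trace / (Fintype.card β : ℝ) ^ k := by
  rw [homDensity, card_hom_cycleGraph_eq_trace hk, Fintype.card_fin]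

theorem homDensity_cycleGraph_le_rpow {p q : ℕ} (hp : Even p) (hp0 : p ≠ 0) (hpq : p ≤ q)
    (W : SimpleGraph β) :
    homDensity (cycleGraph q) W ≤ homDensity (cycleGraph p) W ^ ((q : ℝ) / p) := by
  classical
  have hp2 : 2 ≤ p := by obtain ⟨r, rfl⟩ := hp; omega
  have hA : (W.adjMatrix ℝ).IsHermitian := isSymm_adjMatrix W
  have hN : (0 : ℝ) ≤ Fintype.card β := Nat.cast_nonneg _
  have hTp : 0 ≤ ((W.adjMatrix ℝ) ^ p).trace := by
    rw [hA.trace_pow_eq_sum_eigenvalues_pow]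
    exact sum_nonneg fun i _ => hp.pow_nonneg _
  rw [homDensity_cycleGraph_eq hp2, homDensity_cycleGraph_eq (hp2.trans hpq),
    Real.div_rpow hTp (by positivity), ← Real.rpow_natCast _ p, ← Real.rpow_mul hN,
    mul_div_cancel₀ _ (Nat.cast_ne_zero.mpr hp0), Real.rpow_natCast]
  gcongr
  exact hA.trace_pow_le_trace_pow_rpow hp hp0 hpq

theorem card_hom_map_le {G : SimpleGraph α} (hG : ∀ v, ∃ w, G.Adj v w) (f : γ ↪ β)
    (H : SimpleGraph γ) : Nat.card (G →g H.map f) ≤ Fintype.card γ ^ Fintype.card α := by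
  classical
  have hrange (φ : G →g H.map f) (v : α) : φ v ∈ univ.map f := by
    obtain ⟨w, hvw⟩ := hG v
    obtain ⟨-, a, -, -, ha, -⟩ := φ.map_adj hvw
    exact ha ▸ mem_map_of_mem f (mem_univ a)
  have hinj : Function.Injective
      fun (φ : G →g H.map f) (v : α) => (⟨φ v, hrange φ v⟩ : univ.map f) :=
    fun φ ψ h => DFunLike.ext _ _ fun v => congrArg Subtype.val (congrFun h v)
  have := Nat.card_le_card_of_injective _ hinj
  rwa [Nat.card_fun, Nat.card_eq_finsetCard, card_map, card_univ,
    Nat.card_eq_fintype_card (α := α)] at this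

theorem homDensity_map_le {G : SimpleGraph α} (hG : ∀ v, ∃ w, G.Adj v w) (f : γ ↪ β)
    (H : SimpleGraph γ) : homDensity G (H.map f) ≤
      (Fintype.card γ : ℝ) ^ Fintype.card α / Fintype.card β ^ Fintype.card α := by
  unfold homDensity
  gcongr
  exact_mod_cast card_hom_map_le hG f H

end HomDensity

def paddedTriangle {N : ℕ} (hN : 3 ≤ N) : SimpleGraph (Fin N) :=
  (completeGraph (Fin 3)).map (Fin.castLEEmb hN)

theorem inv_pow_le_homDensity_cycleGraph_paddedTriangle {N k : ℕ} (hN : 3 ≤ N) (hk : 2 ≤ k) :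
    ((N : ℝ) ^ k)⁻¹ ≤ homDensity (cycleGraph k) (paddedTriangle hN) := by
  simpa only [Fintype.card_fin, paddedTriangle] using inv_card_pow_le_homDensity
    ((Embedding.map (Fin.castLEEmb hN) _).toHom.comp (cycleGraph.tricoloring k hk))

theorem homDensity_cycleGraph_paddedTriangle_le {N k : ℕ} (hN : 3 ≤ N) (hk : 2 ≤ k) :
    homDensity (cycleGraph k) (paddedTriangle hN) ≤ (3 : ℝ) ^ k / (N : ℝ) ^ k := by
  simpa only [Fintype.card_fin, Nat.cast_ofNat, paddedTriangle] using
    homDensity_map_le (cycleGraph_exists_adj hk) (Fin.castLEEmb hN) _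

theorem eventually_div_pow_lt_inv_pow_rpow (a : ℝ) {c : ℝ} {p q : ℕ} (h : c * q < p) :
    ∀ᶠ N : ℕ in atTop, a / (N : ℝ) ^ p < (((N : ℝ) ^ q)⁻¹) ^ c := by
  filter_upwards [((tendsto_rpow_atTop (sub_pos.2 h)).comp
    tendsto_natCast_atTop_atTop).eventually_gt_atTop a, eventually_gt_atTop 0] with N hN hN0
  have hx : (0 : ℝ) < N := Nat.cast_pos.mpr hN0
  rwa [div_lt_iff₀ (by positivity), ← Real.rpow_natCast (N : ℝ) p, ← Real.rpow_natCast (N : ℝ) q,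
    Real.inv_rpow (by positivity), ← Real.rpow_mul hx.le, ← Real.rpow_neg (by positivity),
    ← Real.rpow_add hx, neg_add_eq_sub, mul_comm (q : ℝ)]

theorem stmt_8 (m n : ℕ) (hn : 2 ≤ n) (hm : 2 * n < m) :
    (∀ (β : Type) [Fintype β] [Nonempty β] (W : SimpleGraph β),
      homDensity (SimpleGraph.cycleGraph (2 * n)) W ≥
        homDensity (SimpleGraph.cycleGraph m) W ^ ((2 * (n : ℝ)) / (m : ℝ))) ∧
    (∀ c : ℝ, c < (2 * (n : ℝ)) / (m : ℝ) →
      ∃ (N : ℕ) (W : SimpleGraph (Fin N)), 0 < N ∧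
        0 < homDensity (SimpleGraph.cycleGraph m) W ∧
        homDensity (SimpleGraph.cycleGraph (2 * n)) W <
          homDensity (SimpleGraph.cycleGraph m) W ^ c) := by
  have hm0 : (0 : ℝ) < m := by exact_mod_cast (by omega : 0 < m)
  refine ⟨fun β _ _ W => ?_, fun c hc => ?_⟩
  · rw [ge_iff_le, ← inv_div, Real.rpow_inv_le_iff_of_pos (homDensity_nonneg _ _)
      (homDensity_nonneg _ _) (by positivity)]
    exact_mod_cast homDensity_cycleGraph_le_rpow (even_two_mul n) (by omega) hm.le W
  · have hc' : max c 0 * m < ((2 * n : ℕ) : ℝ) := by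
      rw [max_mul_of_nonneg _ _ hm0.le, zero_mul]
      push_cast
      exact max_lt ((lt_div_iff₀ hm0).mp hc) (by positivity)
    obtain ⟨N, hN, hN3⟩ := ((eventually_div_pow_lt_inv_pow_rpow (3 ^ (2 * n)) hc').and
      (eventually_ge_atTop 3)).exists
    have hlow := inv_pow_le_homDensity_cycleGraph_paddedTriangle hN3 (k := m) (by omega)
    have hpos : 0 < homDensity (cycleGraph m) (paddedTriangle hN3) :=
      lt_of_lt_of_le (by positivity) hlow
    refine ⟨N, paddedTriangle hN3, by omega, hpos, ?_⟩
    calc homDensity (cycleGraph (2 * n)) (paddedTriangle hN3)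
        _ ≤ (3 : ℝ) ^ (2 * n) / (N : ℝ) ^ (2 * n) :=
          homDensity_cycleGraph_paddedTriangle_le hN3 (by omega)
        _ < ((N : ℝ) ^ m)⁻¹ ^ max c 0 := hN
        _ ≤ homDensity (cycleGraph m) (paddedTriangle hN3) ^ max c 0 := by gcongr
        _ ≤ homDensity (cycleGraph m) (paddedTriangle hN3) ^ c :=
          Real.rpow_le_rpow_of_exponent_ge hpos (homDensity_le_one _ _) (le_max_left _ _)
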